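/- arXiv:2209.00119 — 4 statements merged into one kernel-verified Lean document; each statement's English description precedes it below -/
import Mathlib

section
/- Let G be a finite simple graph on vertex set {1,…,n} and I(G) ⊆ S its edge ideal. Let f = x_{i_1} + ⋯ + x_{i_r} be a sum of r distinct indeterminates of S, let B ⊆ S be a monomial ideal, and let A ⊆ S be a homogeneous ideal such that A ⊆ B, A : (f) = A, and I(G) = fB + A. Then B = I(G) + N_f. -/
/-!
Write `f = ∑_{i ∈ T} x_i`. The only linear forms in the monomial ideal `B` are combinations of
variables `x_j` with `f x_j ∈ fB ⊆ I(G)`, i.e. of generators of `N_f`. Taking the degree-two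
component of `x_a x_b = f g + q` (with `g ∈ B`, `q ∈ A`) therefore shows `I(G) ⊆ f N_f + A`.
Since `f` is a nonzerodivisor modulo `A`, `f c ∈ fB' + A` with `A ⊆ B'` forces `c ∈ B'`; applied
to `B' = N_f + A` this gives `B ⊆ N_f + I(G)`, and applied to `B' = B` it gives `N_f ⊆ B`.
-/

open MvPolynomial

/-- The height of an ideal: the infimum of `Order.height P` over primes `P` containing it. -/
noncomputable def Ideal.ht {R : Type*} [CommRing R] (I : Ideal R) : ℕ∞ :=
  ⨅ P : {P : PrimeSpectrum R // I ≤ P.asIdeal}, Order.height P.1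

/-- The depth of a local ring: the supremum of lengths of regular sequences contained in the
maximal ideal. -/
noncomputable def IsLocalRing.depth (R : Type*) [CommRing R] [IsLocalRing R] : ℕ∞ :=
  ⨆ rs : {rs : List R // (∀ r ∈ rs, r ∈ IsLocalRing.maximalIdeal R) ∧
      RingTheory.Sequence.IsRegular R rs}, (rs.1.length : ℕ∞)

/-- A local ring is Cohen–Macaulay if its depth equals its Krull dimension. -/
def IsCohenMacaulayLocalRing (R : Type*) [CommRing R] [IsLocalRing R] : Prop :=
  (IsLocalRing.depth R : WithBot ℕ∞) = ringKrullDim R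

/-- A ring is Cohen–Macaulay if its localization at every maximal ideal is a
Cohen–Macaulay local ring. -/
def IsCohenMacaulayRing (R : Type*) [CommRing R] : Prop :=
  ∀ (m : Ideal R) [m.IsMaximal], IsCohenMacaulayLocalRing (Localization.AtPrime m)

/-- The edge ideal of a finite simple graph on vertex set `Fin n`. -/
noncomputable def edgeIdeal (k : Type*) [CommRing k] {n : ℕ} (G : SimpleGraph (Fin n)) :
    Ideal (MvPolynomial (Fin n) k) :=
  Ideal.span {p | ∃ i j, G.Adj i j ∧ p = X i * X j}

/-- An ideal of a polynomial ring is homogeneous if it contains every homogeneous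
component of each of its elements. -/
def IsHomogeneousIdeal {k : Type*} [CommRing k] {σ : Type*} (I : Ideal (MvPolynomial σ k)) :
    Prop :=
  ∀ f ∈ I, ∀ d : ℕ, MvPolynomial.homogeneousComponent d f ∈ I

/-- A monomial ideal is an ideal generated by (monic) monomials. -/
def IsMonomialIdeal {k : Type*} [CommRing k] {σ : Type*} (I : Ideal (MvPolynomial σ k)) :
    Prop :=
  ∃ s : Set (σ →₀ ℕ), I = Ideal.span ((fun d => monomial d (1 : k)) '' s)

/-- A squarefree monomial ideal is an ideal generated by squarefree (monic) monomials. -/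
def IsSquarefreeMonomialIdeal {k : Type*} [CommRing k] {n : ℕ}
    (I : Ideal (MvPolynomial (Fin n) k)) : Prop :=
  ∃ s : Set (Finset (Fin n)), I = Ideal.span ((fun F => ∏ i ∈ F, X i) '' s)

/-- For `f = ∑ i ∈ T, X i`, the ideal `N_f` generated by those variables `x_j` such that `j`
is adjacent in `G` to every vertex of `T`. -/
noncomputable def commonNeighborIdeal (k : Type*) [CommRing k] {n : ℕ} (G : SimpleGraph (Fin n))
    (T : Finset (Fin n)) : Ideal (MvPolynomial (Fin n) k) :=
  Ideal.span {p | ∃ j : Fin n, (∀ i ∈ T, G.Adj i j) ∧ p = X j}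

open Finsupp

theorem Ideal.mem_of_mul_mem_span_singleton_mul_add {R : Type*} [CommRing R] {f c : R}
    {A B : Ideal R} (hcolon : A.colon (Ideal.span {f}) ≤ A) (hAB : A ≤ B)
    (h : f * c ∈ Ideal.span {f} * B + A) : c ∈ B := by
  obtain ⟨_, hp, q, hq, hpq⟩ := Submodule.mem_sup.mp h
  obtain ⟨g, hg, rfl⟩ := Ideal.mem_span_singleton_mul.mp hp
  have hcg : c - g ∈ A := hcolon <| Ideal.mem_colon_span_singleton.mpr <| by
    rwa [sub_mul, mul_comm c, mul_comm g, ← hpq, add_sub_cancel_left]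
  simpa using B.add_mem (hAB hcg) hg

theorem Finsupp.sym2_eq_of_single_add_single_le {σ : Type*} {a b i j : σ} (hab : a ≠ b)
    (h : single a 1 + single b 1 ≤ single i 1 + single j 1) : s(a, b) = s(i, j) := by
  classical
  have ha := h a
  have hb := h b
  simp only [coe_add, Pi.add_apply, single_apply] at ha hb
  rw [Sym2.eq_iff]
  grind

namespace MvPolynomial

variable {σ R : Type*} [CommSemiring R]

theorem homogeneousComponent_add_mul_of_isHomogeneous {f : MvPolynomial σ R} {i : ℕ}
    (hf : f.IsHomogeneous i) (g : MvPolynomial σ R) (n : ℕ) :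
    homogeneousComponent (n + i) (f * g) = f * homogeneousComponent n g := by
  classical
  let _ := gradedAlgebra (σ := σ) (R := R)
  have := DirectSum.coe_decompose_mul_of_left_mem (homogeneousSubmodule σ R) (b := g) (n + i) hf
  rw [if_pos (Nat.le_add_left i n), Nat.add_sub_cancel] at this
  rw [← decomposition.decompose'_apply, ← decomposition.decompose'_apply]
  exact this

theorem coeff_single_add_sum_X_mul_monomial {T : Finset σ} {i : σ} (hi : i ∈ T)
    (d : σ →₀ ℕ) (c : R) :
    coeff (single i 1 + d) ((∑ j ∈ T, X j) * monomial d c) = c := by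
  classical
  rw [Finset.sum_mul, coeff_sum, Finset.sum_eq_single_of_mem i hi, coeff_X_mul, coeff_monomial,
    if_pos rfl]
  intro j _ hji
  rw [X, monomial_mul, one_mul, coeff_monomial, if_neg]
  exact fun h => hji ((single_left_inj one_ne_zero).mp (add_right_cancel h))

end MvPolynomial

section

variable {k : Type*} [CommRing k] {n : ℕ} {G : SimpleGraph (Fin n)}

theorem IsMonomialIdeal.monomial_mem_of_mem_support {σ : Type*} {I : Ideal (MvPolynomial σ k)}
    (hI : IsMonomialIdeal I) {p : MvPolynomial σ k} (hp : p ∈ I) {e : σ →₀ ℕ}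
    (he : e ∈ p.support) : monomial e (1 : k) ∈ I := by
  obtain ⟨s, rfl⟩ := hI
  rw [mem_ideal_span_monomial_image] at hp ⊢
  intro e' he'
  rw [Finset.mem_singleton.mp (support_monomial_subset he')]
  exact hp e he

theorem mem_edgeIdeal_iff {p : MvPolynomial (Fin n) k} :
    p ∈ edgeIdeal k G ↔ ∀ e ∈ p.support, ∃ a b, G.Adj a b ∧ single a 1 + single b 1 ≤ e := by
  have hspan : edgeIdeal k G = Ideal.span ((fun e => monomial e (1 : k)) ''
      {e | ∃ a b, G.Adj a b ∧ e = single a 1 + single b 1}) := by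
    simp only [edgeIdeal, X, monomial_mul, one_mul]
    congr 1
    ext p
    simp [eq_comm]
  rw [hspan, mem_ideal_span_monomial_image]
  simp

theorem sum_X_mul_X_mem_edgeIdeal {T : Finset (Fin n)} {j : Fin n} (hj : ∀ i ∈ T, G.Adj i j) :
    (∑ i ∈ T, X i) * X j ∈ edgeIdeal k G := by
  rw [Finset.sum_mul]
  exact Ideal.sum_mem _ fun i hi => Ideal.subset_span ⟨i, j, hj i hi, rfl⟩

variable [Nontrivial k] {T : Finset (Fin n)} {B A : Ideal (MvPolynomial (Fin n) k)}

theorem adj_of_X_mem (hB : Ideal.span {∑ i ∈ T, X i} * B ≤ edgeIdeal k G) {j : Fin n}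
    (hj : X j ∈ B) {i : Fin n} (hi : i ∈ T) : G.Adj i j := by
  have hfX : (∑ i ∈ T, X i) * X j ∈ edgeIdeal k G :=
    hB (Ideal.mul_mem_mul (Ideal.mem_span_singleton_self _) hj)
  have hij : single i 1 + single j 1 ∈ ((∑ i ∈ T, X i) * X j : MvPolynomial (Fin n) k).support := by
    rw [MvPolynomial.mem_support_iff, X, coeff_single_add_sum_X_mul_monomial hi]
    exact one_ne_zero
  obtain ⟨a, b, hab, hle⟩ := mem_edgeIdeal_iff.mp hfX _ hij
  rw [← G.mem_edgeSet, ← sym2_eq_of_single_add_single_le hab.ne hle]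
  exact hab

theorem homogeneousComponent_one_mem_commonNeighborIdeal (hBmon : IsMonomialIdeal B)
    (hB : Ideal.span {∑ i ∈ T, X i} * B ≤ edgeIdeal k G) {g : MvPolynomial (Fin n) k}
    (hg : g ∈ B) : homogeneousComponent 1 g ∈ commonNeighborIdeal k G T := by
  have hspan : commonNeighborIdeal k G T = Ideal.span (X '' {j | ∀ i ∈ T, G.Adj i j}) := by
    simp only [commonNeighborIdeal]
    congr 1
    ext p
    simp [eq_comm]
  rw [hspan, mem_ideal_span_X_image]
  intro e he
  rw [support_homogeneousComponent, Finset.mem_filter] at he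
  obtain ⟨j, rfl⟩ : e ∈ Set.range (single · 1) := range_single_one ▸ he.2
  exact ⟨j, fun i hi => adj_of_X_mem hB (hBmon.monomial_mem_of_mem_support hg he.1) hi, by simp⟩

theorem edgeIdeal_le_span_mul_commonNeighborIdeal_add (hBmon : IsMonomialIdeal B)
    (hAhom : IsHomogeneousIdeal A) (hlink : edgeIdeal k G = Ideal.span {∑ i ∈ T, X i} * B + A) :
    edgeIdeal k G ≤ Ideal.span {∑ i ∈ T, X i} * commonNeighborIdeal k G T + A := by
  have hfB : Ideal.span {∑ i ∈ T, X i} * B ≤ edgeIdeal k G := hlink ▸ le_sup_left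
  have hf : (∑ i ∈ T, X i : MvPolynomial (Fin n) k).IsHomogeneous 1 :=
    IsHomogeneous.sum _ _ _ fun i _ => isHomogeneous_X k i
  refine Ideal.span_le.mpr ?_
  rintro _ ⟨a, b, hab, rfl⟩
  have hedge : X a * X b ∈ Ideal.span {∑ i ∈ T, X i} * B + A :=
    hlink ▸ Ideal.subset_span ⟨a, b, hab, rfl⟩
  obtain ⟨_, hp, q, hq, hpq⟩ := Submodule.mem_sup.mp hedge
  obtain ⟨g, hg, rfl⟩ := Ideal.mem_span_singleton_mul.mp hp
  have hdeg2 : X a * X b = (∑ i ∈ T, X i) * homogeneousComponent 1 g + homogeneousComponent 2 q :=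
    calc X a * X b = homogeneousComponent 2 (X a * X b) :=
          (homogeneousComponent_eq_self ((isHomogeneous_X k a).mul (isHomogeneous_X k b))).symm
      _ = homogeneousComponent (1 + 1) ((∑ i ∈ T, X i) * g) + homogeneousComponent 2 q := by
        rw [← hpq, map_add]
      _ = (∑ i ∈ T, X i) * homogeneousComponent 1 g + homogeneousComponent 2 q := by
        rw [homogeneousComponent_add_mul_of_isHomogeneous hf]
  rw [SetLike.mem_coe, hdeg2]
  exact Submodule.add_mem_sup
    (Ideal.mul_mem_mul (Ideal.mem_span_singleton_self _)
      (homogeneousComponent_one_mem_commonNeighborIdeal hBmon hfB hg))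
    (hAhom q hq 2)

end

theorem stmt0_general {k : Type*} [Field k] {n : ℕ} (G : SimpleGraph (Fin n))
    (T : Finset (Fin n))
    (f : MvPolynomial (Fin n) k) (hf : f = ∑ i ∈ T, X i)
    (B A : Ideal (MvPolynomial (Fin n) k))
    (hBmon : IsMonomialIdeal B) (hAhom : IsHomogeneousIdeal A)
    (hAB : A ≤ B) (hcolon : A.colon (Ideal.span {f}) = A)
    (hlink : edgeIdeal k G = Ideal.span {f} * B + A) :
    B = edgeIdeal k G + commonNeighborIdeal k G T := by
  subst hf
  have hfB : Ideal.span {∑ i ∈ T, X i} * B ≤ edgeIdeal k G := hlink ▸ le_sup_left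
  have hEB : edgeIdeal k G ≤ B := hlink ▸ sup_le Ideal.mul_le_right hAB
  have hEA : A ≤ edgeIdeal k G := hlink ▸ le_sup_right
  have hEN := edgeIdeal_le_span_mul_commonNeighborIdeal_add hBmon hAhom hlink
  refine le_antisymm (fun b hb => ?_) (sup_le hEB ?_)
  · have hfb : (∑ i ∈ T, X i) * b ∈
        Ideal.span {∑ i ∈ T, X i} * (commonNeighborIdeal k G T + A) + A :=
      hEN.trans (sup_le_sup_right (Ideal.mul_mono_right le_sup_left) _)
        (hfB (Ideal.mul_mem_mul (Ideal.mem_span_singleton_self _) hb))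
    exact sup_le le_sup_right (hEA.trans le_sup_left)
      (Ideal.mem_of_mul_mem_span_singleton_mul_add hcolon.le le_sup_right hfb)
  · refine Ideal.span_le.mpr ?_
    rintro _ ⟨j, hj, rfl⟩
    exact Ideal.mem_of_mul_mem_span_singleton_mul_add hcolon.le hAB
      (hlink ▸ sum_X_mul_X_mem_edgeIdeal hj)

/-- If the edge ideal `I(G)` satisfies `I(G) = fB + A` where
`f = x_{i₁} + ⋯ + x_{i_r}` is a sum of distinct indeterminates, `B` is a monomial ideal and
`A` is a homogeneous ideal with `A ⊆ B` and `A : (f) = A`, then `B = I(G) + N_f`. -/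
theorem stmt0 {k : Type*} [Field k] {n : ℕ} (G : SimpleGraph (Fin n))
    (T : Finset (Fin n)) (hT : T.Nonempty)
    (f : MvPolynomial (Fin n) k) (hf : f = ∑ i ∈ T, X i)
    (B A : Ideal (MvPolynomial (Fin n) k))
    (hBmon : IsMonomialIdeal B) (hAhom : IsHomogeneousIdeal A)
    (hAB : A ≤ B) (hcolon : A.colon (Ideal.span {f}) = A)
    (hlink : edgeIdeal k G = Ideal.span {f} * B + A) :
    B = edgeIdeal k G + commonNeighborIdeal k G T :=
  stmt0_general G T f hf B A hBmon hAhom hAB hcolon hlink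
end

section
/- Let G be a finite simple graph on vertex set {1,…,n} and I(G) ⊆ S its edge ideal. Let f = x_{i_1} + ⋯ + x_{i_r} be a sum of r distinct indeterminates of S, let B ⊆ S be a monomial ideal, and let A ⊆ S be a homogeneous ideal such that A ⊆ B, A : (f) = A, ht(A) + 1 = ht(I(G)), and I(G) = fB + A. Then G has a vertex of degree at least r; in fact there is a vertex j adjacent in G to every one of i_1,…,i_r. -/
open MvPolynomial

/-! If no vertex is adjacent to all of `T`, then `A` already contains every edge monomial
`x_a x_b`: writing `x_a x_b = f c + z` with `z ∈ A` and comparing degree-two components gives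
`x_a x_b = f ℓ + z₂` with `ℓ` linear, `z₂ ∈ A` and `f ℓ ∈ I(G)`. For `i ∈ T` not adjacent to
`j ∉ T`, the coefficient of `x_i x_j` in `f ℓ` is that of `x_j` in `ℓ` (for `j ∈ T` look at
`x_j²` instead), so `ℓ = 0`. Hence `A = I(G)`, contradicting `ht A + 1 = ht I(G) < ∞`, which
holds because `S` is Noetherian. -/

theorem Finsupp.exists_eq_single_of_degree_eq_one {σ : Type*} {d : σ →₀ ℕ}
    (hd : d.degree = 1) : ∃ j, d = single j 1 := by
  obtain ⟨j, hj⟩ : d.support.Nonempty := by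
    rw [Finsupp.support_nonempty_iff]
    rintro rfl
    simp at hd
  have hle : single j 1 ≤ d :=
    Finsupp.single_le_iff.2 (Nat.one_le_iff_ne_zero.2 (Finsupp.mem_support_iff.1 hj))
  have hrest : d - single j 1 = 0 := by
    have h := congrArg degree (tsub_add_cancel_of_le hle)
    rw [map_add, degree_single, hd] at h
    exact (degree_eq_zero_iff _).1 (by omega)
  exact ⟨j, (tsub_eq_zero_iff_le.1 hrest).antisymm hle⟩

namespace MvPolynomial

variable {σ R : Type*} [CommSemiring R]

theorem eq_zero_of_isHomogeneous_one {p : MvPolynomial σ R} (hp : p.IsHomogeneous 1)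
    (h : ∀ j, coeff (Finsupp.single j 1) p = 0) : p = 0 := by
  ext d
  by_cases hd : d.degree = 1
  · obtain ⟨j, rfl⟩ := Finsupp.exists_eq_single_of_degree_eq_one hd
    exact h j
  · exact hp.coeff_eq_zero hd

theorem homogeneousComponent_mul_of_isHomogeneous {φ : MvPolynomial σ R} {i : ℕ}
    (hφ : φ.IsHomogeneous i) (m : ℕ) (ψ : MvPolynomial σ R) :
    homogeneousComponent (m + i) (φ * ψ) = φ * homogeneousComponent m ψ := by
  let := gradedAlgebra (σ := σ) (R := R)
  simp only [← decomposition.decompose'_apply]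
  have h := DirectSum.coe_decompose_mul_of_left_mem_of_le (b := ψ) _
    ((mem_homogeneousSubmodule i φ).2 hφ) (Nat.le_add_left i m)
  rw [Nat.add_sub_cancel] at h
  exact h

theorem coeff_single_add_sum_X_mul [DecidableEq σ] {T : Finset σ} {i : σ} (hi : i ∈ T)
    {e : σ →₀ ℕ} (he : ∀ s ∈ T, s ∈ e.support → s = i) (p : MvPolynomial σ R) :
    coeff (Finsupp.single i 1 + e) ((∑ s ∈ T, X s) * p) = coeff e p := by
  rw [Finset.sum_mul, coeff_sum, Finset.sum_eq_single_of_mem i hi, coeff_X_mul]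
  intro s hs hsi
  rw [coeff_X_mul', if_neg]
  rw [Finsupp.mem_support_iff, Finsupp.add_apply, Finsupp.single_eq_of_ne hsi, zero_add]
  exact fun hes => hsi (he s hs (Finsupp.mem_support_iff.2 hes))

theorem X_mul_X_eq_monomial (a b : σ) :
    (X a * X b : MvPolynomial σ R) = monomial (Finsupp.single a 1 + Finsupp.single b 1) 1 := by
  rw [X, X, monomial_mul, one_mul]

end MvPolynomial

theorem Ideal.ht_ne_top {R : Type*} [CommRing R] [IsNoetherianRing R] {I : Ideal R}
    (hI : I ≠ ⊤) : I.ht ≠ ⊤ := by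
  obtain ⟨P, hP, hIP⟩ := I.exists_le_maximal hI
  refine ne_top_of_le_ne_top ?_ (iInf_le _ ⟨⟨P, hP.isPrime⟩, hIP⟩)
  rw [← PrimeSpectrum.height_eq_orderHeight]
  exact Ideal.height_ne_top_of_isPrime (I := P)

section EdgeIdeal

variable {k : Type*} [CommRing k] {n : ℕ} (G : SimpleGraph (Fin n))

theorem edgeIdeal_eq_span_monomial : edgeIdeal k G = Ideal.span ((fun d => monomial d (1 : k)) ''
    {d | ∃ a b, G.Adj a b ∧ d = Finsupp.single a 1 + Finsupp.single b 1}) := by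
  rw [edgeIdeal, Set.image]
  simp_rw [X_mul_X_eq_monomial]
  congr 1
  ext p
  constructor
  · rintro ⟨a, b, hab, rfl⟩
    exact ⟨_, ⟨a, b, hab, rfl⟩, rfl⟩
  · rintro ⟨_, ⟨a, b, hab, rfl⟩, rfl⟩
    exact ⟨a, b, hab, rfl⟩

theorem edgeIdeal_ne_top [Nontrivial k] : edgeIdeal k G ≠ ⊤ := by
  refine ne_top_of_le_ne_top (RingHom.ker_ne_top (constantCoeff (R := k) (σ := Fin n))) ?_
  rw [edgeIdeal, Ideal.span_le]
  rintro _ ⟨a, b, -, rfl⟩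
  simp

variable {G}

theorem adj_of_coeff_ne_zero_of_mem_edgeIdeal {p : MvPolynomial (Fin n) k}
    (hp : p ∈ edgeIdeal k G) {i j : Fin n}
    (hij : coeff (Finsupp.single i 1 + Finsupp.single j 1) p ≠ 0) : G.Adj i j := by
  rw [edgeIdeal_eq_span_monomial, mem_ideal_span_monomial_image] at hp
  obtain ⟨_, ⟨a, b, hab, rfl⟩, hle⟩ := hp _ (mem_support_iff.2 hij)
  have hsupp : ∀ c, 1 ≤ (Finsupp.single a 1 + Finsupp.single b 1 : Fin n →₀ ℕ) c →
      c = i ∨ c = j := by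
    intro c hc
    by_contra! hcij
    have := hle c
    simp only [Finsupp.add_apply, Finsupp.single_eq_of_ne hcij.1,
      Finsupp.single_eq_of_ne hcij.2] at this hc
    omega
  rcases hsupp a (by simp) with rfl | rfl <;> rcases hsupp b (by simp) with rfl | rfl
  all_goals first | exact hab | exact hab.symm | exact absurd hab G.irrefl

theorem forall_adj_of_sum_X_mul_mem_edgeIdeal {T : Finset (Fin n)} {p : MvPolynomial (Fin n) k}
    (hp : (∑ s ∈ T, X s) * p ∈ edgeIdeal k G) {j : Fin n}
    (hj : coeff (Finsupp.single j 1) p ≠ 0) : ∀ i ∈ T, G.Adj i j := by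
  intro i hi
  by_cases hjT : j ∈ T
  · -- the square `x_j ^ 2` would then occur in `f p`, but it is divisible by no edge
    rw [← coeff_single_add_sum_X_mul hjT (by simp) p] at hj
    exact absurd (adj_of_coeff_ne_zero_of_mem_edgeIdeal hp hj) G.irrefl
  · have hjT' : ∀ s ∈ T, s ∈ (Finsupp.single j 1).support → s = i := fun s hs hsj =>
      absurd ((Finsupp.mem_support_single _ _ _).1 hsj).1 (ne_of_mem_of_not_mem hs hjT)
    rw [← coeff_single_add_sum_X_mul hi hjT' p] at hj
    exact adj_of_coeff_ne_zero_of_mem_edgeIdeal hp hj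

theorem edgeIdeal_le_of_eq_span_sum_X_mul_add {T : Finset (Fin n)}
    {A B : Ideal (MvPolynomial (Fin n) k)}
    (hA : IsHomogeneousIdeal A) (hT : ∀ j, ∃ i ∈ T, ¬ G.Adj i j)
    (hlink : edgeIdeal k G = Ideal.span {∑ s ∈ T, X s} * B + A) : edgeIdeal k G ≤ A := by
  set f : MvPolynomial (Fin n) k := ∑ s ∈ T, X s
  have hf : f.IsHomogeneous 1 := IsHomogeneous.sum _ _ _ fun s _ => isHomogeneous_X k s
  rw [edgeIdeal, Ideal.span_le]
  rintro _ ⟨a, b, hab, rfl⟩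
  have hedge : X a * X b ∈ edgeIdeal k G := Ideal.subset_span ⟨a, b, hab, rfl⟩
  obtain ⟨y, hy, z, hz, hyz⟩ := Submodule.mem_sup.1 (hlink ▸ hedge)
  obtain ⟨c, -, rfl⟩ := Ideal.mem_span_singleton_mul.1 hy
  have hdeg2 : X a * X b = f * homogeneousComponent 1 c + homogeneousComponent 2 z := by
    rw [← homogeneousComponent_mul_of_isHomogeneous hf 1, ← map_add, hyz,
      homogeneousComponent_eq_self ((isHomogeneous_X k a).mul (isHomogeneous_X k b))]
  have hfℓ : f * homogeneousComponent 1 c ∈ edgeIdeal k G := by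
    rw [eq_sub_of_add_eq hdeg2.symm]
    exact sub_mem hedge (hlink ▸ Ideal.mem_sup_right (hA z hz 2))
  have hℓ : homogeneousComponent 1 c = 0 := by
    refine eq_zero_of_isHomogeneous_one (homogeneousComponent_isHomogeneous 1 c) fun j => ?_
    by_contra hj
    obtain ⟨i, hi, hij⟩ := hT j
    exact hij (forall_adj_of_sum_X_mul_mem_edgeIdeal hfℓ hj i hi)
  rw [hdeg2, hℓ, mul_zero, zero_add]
  exact hA z hz 2

end EdgeIdeal

theorem stmt3_general {k : Type*} [Field k] {n : ℕ} (G : SimpleGraph (Fin n))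
    [DecidableRel G.Adj]
    (T : Finset (Fin n))
    (f : MvPolynomial (Fin n) k) (hf : f = ∑ i ∈ T, X i)
    (B A : Ideal (MvPolynomial (Fin n) k))
    (hAhom : IsHomogeneousIdeal A)
    (hht : Ideal.ht A + 1 = Ideal.ht (edgeIdeal k G))
    (hlink : edgeIdeal k G = Ideal.span {f} * B + A) :
    ∃ j : Fin n, (∀ i ∈ T, G.Adj i j) ∧ T.card ≤ G.degree j := by
  suffices h : ∃ j, ∀ i ∈ T, G.Adj i j by
    obtain ⟨j, hj⟩ := h
    refine ⟨j, hj, ?_⟩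
    rw [← G.card_neighborFinset_eq_degree]
    exact Finset.card_le_card fun i hi => (G.mem_neighborFinset j i).2 (hj i hi).symm
  by_contra! hT
  subst hf
  have hA : A = edgeIdeal k G :=
    le_antisymm (hlink ▸ le_sup_right) (edgeIdeal_le_of_eq_span_sum_X_mul_add hAhom hT hlink)
  rw [hA] at hht
  exact ((ENat.lt_add_one_iff (Ideal.ht_ne_top (edgeIdeal_ne_top G))).2 le_rfl).ne' hht

/-- With hypotheses as in the paper's Corollary 3.6, `G` has a vertex of degree
at least `r`; in fact there is a vertex adjacent to every one of `i₁, …, i_r`. -/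
theorem stmt3 {k : Type*} [Field k] {n : ℕ} (G : SimpleGraph (Fin n))
    [DecidableRel G.Adj]
    (T : Finset (Fin n)) (hT : T.Nonempty)
    (f : MvPolynomial (Fin n) k) (hf : f = ∑ i ∈ T, X i)
    (B A : Ideal (MvPolynomial (Fin n) k))
    (hBmon : IsMonomialIdeal B) (hAhom : IsHomogeneousIdeal A)
    (hAB : A ≤ B) (hcolon : A.colon (Ideal.span {f}) = A)
    (hht : Ideal.ht A + 1 = Ideal.ht (edgeIdeal k G))
    (hlink : edgeIdeal k G = Ideal.span {f} * B + A) :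
    ∃ j : Fin n, (∀ i ∈ T, G.Adj i j) ∧ T.card ≤ G.degree j :=
  stmt3_general G T f hf B A hAhom hht hlink
end

section
/- Let N, I, J be ideals of S with N ⊆ I ∩ J, and let φ : J/N → I/N be an isomorphism of S/N-modules (where J/N and I/N are viewed as S/N-submodules of S/N). Let a ∈ J be such that a is a nonzerodivisor on S/N. If φ(a + N) = ra + N for some r ∈ S, then I = rJ + N. -/
open MvPolynomial

/-!
An `A`-linear map `φ` from an ideal `J` of a commutative ring `A` into `A` is determined by its
value at a nonzerodivisor `a ∈ J`: from `a • x = x • a` we get `a * φ x = x * φ a`, so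
`φ a = c * a` forces `φ x = c * x`. Applied in `S/N`, the isomorphism `J/N ≅ I/N` is
multiplication by `r`, so `I/N = (r) · J/N`, and pulling back along `S → S/N` gives `I = rJ + N`.
-/

section

variable {A : Type*} [CommRing A] {J I : Ideal A}

theorem LinearMap.apply_eq_mul_of_apply_nonzerodivisor (φ : J →ₗ[A] A) {a : A} (ha : a ∈ J)
    (hreg : ∀ y : A, a * y = 0 → y = 0) {c : A} (hφa : φ ⟨a, ha⟩ = c * a) (x : J) :
    φ x = c * x := by
  have hcomm : a * φ x = x * φ ⟨a, ha⟩ := by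
    rw [← smul_eq_mul, ← map_smul, ← smul_eq_mul (x : A), ← map_smul]
    congr 1
    ext
    exact mul_comm _ _
  refine sub_eq_zero.mp (hreg _ ?_)
  rw [mul_sub, hcomm, hφa]
  ring

theorem Ideal.eq_span_singleton_mul_of_linearEquiv (φ : J ≃ₗ[A] I) {a : A} (ha : a ∈ J)
    (hreg : ∀ y : A, a * y = 0 → y = 0) {c : A} (hφa : (φ ⟨a, ha⟩ : A) = c * a) :
    I = Ideal.span {c} * J := by
  have hφ : ∀ x : J, (φ x : A) = c * x :=
    (I.subtype.comp φ.toLinearMap).apply_eq_mul_of_apply_nonzerodivisor ha hreg hφa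
  ext y
  rw [Ideal.mem_span_singleton_mul]
  constructor
  · intro hy
    obtain ⟨x, hx⟩ := φ.surjective ⟨y, hy⟩
    exact ⟨x, x.2, by rw [← hφ, hx]⟩
  · rintro ⟨x, hx, rfl⟩
    exact hφ ⟨x, hx⟩ ▸ (φ ⟨x, hx⟩).2

end

theorem Ideal.eq_sup_of_map_eq_map {R : Type*} [CommRing R] {N I K : Ideal R} (hNI : N ≤ I)
    (h : I.map (Ideal.Quotient.mk N) = K.map (Ideal.Quotient.mk N)) : I = K ⊔ N := by
  have hcomap := congrArg (Ideal.comap (Ideal.Quotient.mk N)) h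
  rwa [Ideal.comap_map_of_surjective' _ Ideal.Quotient.mk_surjective,
    Ideal.comap_map_of_surjective' _ Ideal.Quotient.mk_surjective, Ideal.mk_ker,
    sup_eq_left.mpr hNI] at hcomap

theorem stmt12_general {k : Type*} [Field k] {n : ℕ}
    (N I J : Ideal (MvPolynomial (Fin n) k)) (hNI : N ≤ I)
    (φ : (J.map (Ideal.Quotient.mk N)) ≃ₗ[MvPolynomial (Fin n) k ⧸ N]
         (I.map (Ideal.Quotient.mk N)))
    (a : MvPolynomial (Fin n) k) (ha : a ∈ J)
    (hreg : ∀ y : MvPolynomial (Fin n) k ⧸ N, Ideal.Quotient.mk N a * y = 0 → y = 0)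
    (r : MvPolynomial (Fin n) k)
    (hφa : (φ ⟨Ideal.Quotient.mk N a, Ideal.mem_map_of_mem _ ha⟩ :
        MvPolynomial (Fin n) k ⧸ N) = Ideal.Quotient.mk N (r * a)) :
    I = Ideal.span {r} * J + N := by
  rw [map_mul] at hφa
  have hquot := Ideal.eq_span_singleton_mul_of_linearEquiv φ _ hreg hφa
  rw [← Set.image_singleton, ← Ideal.map_span, ← Ideal.map_mul] at hquot
  exact Ideal.eq_sup_of_map_eq_map hNI hquot

/-- claim (2) of the paper's Proposition 5.2: if `φ : J/N → I/N` is an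
`S/N`-module isomorphism, `a ∈ J` is a nonzerodivisor on `S/N`, and `φ(a + N) = ra + N`,
then `I = rJ + N`. -/
theorem stmt12 {k : Type*} [Field k] {n : ℕ}
    (N I J : Ideal (MvPolynomial (Fin n) k)) (hNI : N ≤ I) (hNJ : N ≤ J)
    (φ : (J.map (Ideal.Quotient.mk N)) ≃ₗ[MvPolynomial (Fin n) k ⧸ N]
         (I.map (Ideal.Quotient.mk N)))
    (a : MvPolynomial (Fin n) k) (ha : a ∈ J)
    (hreg : ∀ y : MvPolynomial (Fin n) k ⧸ N, Ideal.Quotient.mk N a * y = 0 → y = 0)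
    (r : MvPolynomial (Fin n) k)
    (hφa : (φ ⟨Ideal.Quotient.mk N a, Ideal.mem_map_of_mem _ ha⟩ :
        MvPolynomial (Fin n) k ⧸ N) = Ideal.Quotient.mk N (r * a)) :
    I = Ideal.span {r} * J + N :=
  stmt12_general N I J hNI φ a ha hreg r hφa
end

section
/- Let N, I, J be monomial ideals of S with N ⊆ I ∩ J, and let φ : J/N → I/N be an isomorphism of S/N-modules (where J/N and I/N are viewed as S/N-submodules of S/N). Suppose a ∈ J is a monomial that is a nonzerodivisor on S/N, and let x ∈ I be any element with x + N = φ(a + N). Then L := aI + N is a monomial ideal of S, L = xJ + N, and both N : (a) = N and N : (x) = N. -/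
open MvPolynomial

/-!
Work in `R = S/N`. Any `R`-linear map `f` out of an ideal `J` satisfies `u • f v = v • f u` for
`u, v ∈ J`, because `u • v = v • u` already in `J`. Taking `u = ā` and `f = φ` gives
`ā · Ī = x̄ · J̄` in `R`, which lifts to `aI + N = xJ + N` in `S`; and since `φ` is
injective, `y x̄ = φ (y ā) = 0` forces `y ā = 0`, so `x̄` is a nonzerodivisor along with `ā`.
-/

section Monomial

variable {k σ : Type*} [CommRing k]

theorem IsMonomialIdeal.sup {I J : Ideal (MvPolynomial σ k)} (hI : IsMonomialIdeal I)
    (hJ : IsMonomialIdeal J) : IsMonomialIdeal (I ⊔ J) := by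
  obtain ⟨s, rfl⟩ := hI
  obtain ⟨t, rfl⟩ := hJ
  exact ⟨s ∪ t, by rw [Set.image_union, Ideal.span_union]⟩

theorem IsMonomialIdeal.span_monomial_mul {I : Ideal (MvPolynomial σ k)} (hI : IsMonomialIdeal I)
    (d : σ →₀ ℕ) : IsMonomialIdeal (Ideal.span {monomial d (1 : k)} * I) := by
  obtain ⟨s, rfl⟩ := hI
  refine ⟨(d + ·) '' s, ?_⟩
  rw [Ideal.span_mul_span', Set.singleton_mul, Set.image_image, Set.image_image]
  simp only [monomial_mul, one_mul]

end Monomial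

namespace Ideal

variable {R : Type*} [CommRing R]

theorem colon_span_singleton_eq_self {N : Ideal R} {r : R}
    (hr : Quotient.mk N r ∈ nonZeroDivisorsLeft (R ⧸ N)) : N.colon (span {r}) = N := by
  refine le_antisymm (fun s hs => ?_) le_colon
  rw [mem_colon_span_singleton] at hs
  rw [← Quotient.eq_zero_iff_mem] at hs ⊢
  exact hr _ (by rw [← map_mul, mul_comm, hs])

theorem sup_eq_sup_of_map_mk_eq {A B N : Ideal R}
    (h : A.map (Quotient.mk N) = B.map (Quotient.mk N)) : A ⊔ N = B ⊔ N := by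
  have hcomap := congrArg (comap (Quotient.mk N)) h
  simpa only [comap_map_of_surjective' _ Quotient.mk_surjective, mk_ker] using hcomap

variable {I J : Ideal R}

theorem smul_apply_comm {M : Type*} [AddCommMonoid M] [Module R M] (f : J →ₗ[R] M) (u v : J) :
    (u : R) • f v = (v : R) • f u := by
  rw [← map_smul, ← map_smul]
  congr 1
  ext
  exact mul_comm _ _

variable (φ : J ≃ₗ[R] I) {a : R} (ha : a ∈ J)

theorem span_singleton_mul_eq_of_linearEquiv :
    span {a} * I = span {(φ ⟨a, ha⟩ : R)} * J := by
  have key (j : J) : (φ ⟨a, ha⟩ : R) * j = a * φ j :=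
    (mul_comm _ _).trans (smul_apply_comm (I.subtype ∘ₗ φ.toLinearMap) j ⟨a, ha⟩)
  refine le_antisymm (span_singleton_mul_le_iff.2 fun i hi => ?_)
    (span_singleton_mul_le_iff.2 fun j hj => ?_)
  · obtain ⟨j, hj⟩ := φ.surjective ⟨i, hi⟩
    obtain rfl : (φ j : R) = i := congrArg Subtype.val hj
    exact mem_span_singleton_mul.2 ⟨j, j.2, key j⟩
  · exact mem_span_singleton_mul.2 ⟨_, (φ ⟨j, hj⟩).2, (key ⟨j, hj⟩).symm⟩

theorem linearEquiv_apply_mem_nonZeroDivisorsLeft (hreg : a ∈ nonZeroDivisorsLeft R) :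
    (φ ⟨a, ha⟩ : R) ∈ nonZeroDivisorsLeft R := by
  intro y hy
  have h : φ (y • ⟨a, ha⟩) = 0 := by
    rw [map_smul]
    exact Subtype.ext (by simp [mul_comm y, hy])
  rw [φ.map_eq_zero_iff] at h
  exact hreg y (by rw [mul_comm]; exact congrArg Subtype.val h)

end Ideal

theorem stmt16_general {k : Type*} [Field k] {n : ℕ}
    (N I J : Ideal (MvPolynomial (Fin n) k))
    (hNmon : IsMonomialIdeal N) (hImon : IsMonomialIdeal I)
    (φ : (J.map (Ideal.Quotient.mk N)) ≃ₗ[MvPolynomial (Fin n) k ⧸ N]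
         (I.map (Ideal.Quotient.mk N)))
    (a : MvPolynomial (Fin n) k) (ha : a ∈ J)
    (d : Fin n →₀ ℕ) (hamon : a = monomial d (1 : k))
    (hreg : ∀ y : MvPolynomial (Fin n) k ⧸ N, Ideal.Quotient.mk N a * y = 0 → y = 0)
    (x : MvPolynomial (Fin n) k)
    (hφa : Ideal.Quotient.mk N x =
      (φ ⟨Ideal.Quotient.mk N a, Ideal.mem_map_of_mem _ ha⟩ : MvPolynomial (Fin n) k ⧸ N)) :
    IsMonomialIdeal (Ideal.span {a} * I + N) ∧
    Ideal.span {a} * I + N = Ideal.span {x} * J + N ∧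
    N.colon (Ideal.span {a}) = N ∧ N.colon (Ideal.span {x}) = N := by
  have hspan := Ideal.span_singleton_mul_eq_of_linearEquiv φ (Ideal.mem_map_of_mem _ ha)
  rw [← hφa] at hspan
  have hregx := Ideal.linearEquiv_apply_mem_nonZeroDivisorsLeft φ (Ideal.mem_map_of_mem _ ha) hreg
  rw [← hφa] at hregx
  refine ⟨?_, ?_, Ideal.colon_span_singleton_eq_self hreg,
    Ideal.colon_span_singleton_eq_self hregx⟩
  · rw [hamon]
    exact (hImon.span_monomial_mul d).sup hNmon
  · refine Ideal.sup_eq_sup_of_map_mk_eq ?_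
    simpa only [Ideal.map_mul, Ideal.map_span, Set.image_singleton] using hspan

/-- claim (1) of the paper's Proposition 5.2: if `N`, `I`, `J` are monomial
ideals, `φ : J/N → I/N` is an `S/N`-module isomorphism, `a ∈ J` is a monomial that is a
nonzerodivisor on `S/N`, and `x ∈ I` satisfies `x + N = φ(a + N)`, then `L = aI + N` is a
monomial ideal, `L = xJ + N`, and `N : (a) = N` and `N : (x) = N`. -/
theorem stmt16 {k : Type*} [Field k] {n : ℕ}
    (N I J : Ideal (MvPolynomial (Fin n) k)) (hNI : N ≤ I) (hNJ : N ≤ J)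
    (hNmon : IsMonomialIdeal N) (hImon : IsMonomialIdeal I) (hJmon : IsMonomialIdeal J)
    (φ : (J.map (Ideal.Quotient.mk N)) ≃ₗ[MvPolynomial (Fin n) k ⧸ N]
         (I.map (Ideal.Quotient.mk N)))
    (a : MvPolynomial (Fin n) k) (ha : a ∈ J)
    (d : Fin n →₀ ℕ) (hamon : a = monomial d (1 : k))
    (hreg : ∀ y : MvPolynomial (Fin n) k ⧸ N, Ideal.Quotient.mk N a * y = 0 → y = 0)
    (x : MvPolynomial (Fin n) k) (hx : x ∈ I)
    (hφa : Ideal.Quotient.mk N x =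
      (φ ⟨Ideal.Quotient.mk N a, Ideal.mem_map_of_mem _ ha⟩ : MvPolynomial (Fin n) k ⧸ N)) :
    IsMonomialIdeal (Ideal.span {a} * I + N) ∧
    Ideal.span {a} * I + N = Ideal.span {x} * J + N ∧
    N.colon (Ideal.span {a}) = N ∧ N.colon (Ideal.span {x}) = N :=
  stmt16_general N I J hNmon hImon φ a ha d hamon hreg x hφa
end
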